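/- Let 𝒜, ℬ be Büchi automata over alphabet Σ with distribution function σ: Σ → {1,2}, and let k1, k2 ∈ ℕ ∪ {ω}. If 𝒜 ⊑(k1,k2) ℬ, then for every infinite word w ∈ L(𝒜) there exists v ∈ L(ℬ) such that the projections of w and v onto Σ1 agree and the projections onto Σ2 agree, where Σi = σ⁻¹(i). -/

import Mathlib

open scoped Classical

/-- A Büchi automaton over alphabet `S`. -/
structure BA (S : Type) where
  Q : Type
  init : Q
  trans : Q → S → Q → Prop
  acc : Q → Prop

/-- The Büchi language of `A`: infinite words with a run from the initial state
visiting accepting states infinitely often. -/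
def BA.Lang {S : Type} (A : BA S) : Set (ℕ → S) :=
  { w | ∃ ρ : ℕ → A.Q, ρ 0 = A.init ∧ (∀ n, A.trans (ρ n) (w n) (ρ (n+1))) ∧
        ∀ n, ∃ m, n ≤ m ∧ A.acc (ρ m) }

/-- A configuration of the two-buffer simulation game: Spoiler's state, contents of
the two FIFO buffers (head = oldest letter), Duplicator's state. -/
structure Cfg {S : Type} (A B : BA S) where
  qa : A.Q
  b1 : List S
  b2 : List S
  qb : B.Q

/-- The configuration after Spoiler's move `m = (a, q')`: his state becomes `q'` and
the letter `a` is appended to buffer `σ a` (`true` = buffer 1, `false` = buffer 2). -/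
def midCfg {S : Type} {A B : BA S} (σ : S → Bool) (c : Cfg A B) (m : S × A.Q) : Cfg A B :=
  ⟨m.2, if σ m.1 then c.b1 ++ [m.1] else c.b1, if σ m.1 then c.b2 else c.b2 ++ [m.1], c.qb⟩

/-- Applying a finite sequence of Duplicator consumption steps: each step picks a buffer
(`true` = buffer 1) and a successor state, consuming the oldest letter of that buffer
along a matching transition of `B`.  Returns `none` if some step is illegal. -/
noncomputable def dupApply {S : Type} (A B : BA S) :
    Cfg A B → List (Bool × B.Q) → Option (Cfg A B)
  | c, [] => some c
  | c, (j, p') :: ms =>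
    if j then
      match c.b1 with
      | [] => none
      | b :: β => if B.trans c.qb b p' then dupApply A B ⟨c.qa, β, c.b2, p'⟩ ms else none
    else
      match c.b2 with
      | [] => none
      | b :: β => if B.trans c.qb b p' then dupApply A B ⟨c.qa, c.b1, β, p'⟩ ms else none

/-- The configuration at the start of round `n` (i.e. after Duplicator's moves of
round `n-1`), given Spoiler's moves `sp` and Duplicator's responses `dm`;
`none` once an illegal move has occurred. -/
noncomputable def playCfg {S : Type} (A B : BA S) (σ : S → Bool)
    (sp : ℕ → S × A.Q) (dm : ℕ → List (Bool × B.Q)) : ℕ → Option (Cfg A B)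
  | 0 => some ⟨A.init, [], [], B.init⟩
  | n+1 =>
    match playCfg A B σ sp dm n with
    | none => none
    | some c =>
      if A.trans c.qa (sp n).1 (sp n).2 then dupApply A B (midCfg σ c (sp n)) (dm n) else none

/-- Number of letters put into buffer `j` by Spoiler during the first `n` rounds. -/
noncomputable def pushed {S : Type} {QA : Type} (σ : S → Bool) (sp : ℕ → S × QA)
    (j : Bool) (n : ℕ) : ℕ :=
  ((Finset.range n).filter fun i => σ (sp i).1 = j).card

/-- Number of letters consumed from buffer `j` by Duplicator during the first `n` rounds. -/
noncomputable def consumed {QB : Type} (dm : ℕ → List (Bool × QB)) (j : Bool) (n : ℕ) : ℕ :=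
  ∑ i ∈ Finset.range n, ((dm i).filter fun x => x.1 = j).length

/-- Duplicator's strategy is consistent with the moves `dm` of a play. -/
def Consistent {S : Type} (A B : BA S)
    (dstrat : List ((S × A.Q) × List (Bool × B.Q)) → (S × A.Q) → List (Bool × B.Q))
    (sp : ℕ → S × A.Q) (dm : ℕ → List (Bool × B.Q)) : Prop :=
  ∀ n, dm n = dstrat (List.ofFn fun i : Fin n => (sp i, dm i)) (sp n)

/-- Spoiler's moves are legal as long as the play is defined. -/
def SpLegal {S : Type} (A B : BA S) (σ : S → Bool)
    (sp : ℕ → S × A.Q) (dm : ℕ → List (Bool × B.Q)) : Prop :=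
  ∀ n c, playCfg A B σ sp dm n = some c → A.trans c.qa (sp n).1 (sp n).2

/-- Duplicator's winning condition for a play of the two-buffer game with
capacities `(k1, k2)`: the buffers never exceed their capacities (checked after her
moves), and either Spoiler's run visits accepting states only finitely often, or
every letter put into a buffer is eventually consumed and Duplicator's run visits
accepting states infinitely often. -/
def Win2 {S : Type} (A B : BA S) (σ : S → Bool) (k1 k2 : ℕ∞)
    (sp : ℕ → S × A.Q) (dm : ℕ → List (Bool × B.Q)) : Prop :=
  (∀ n c, playCfg A B σ sp dm n = some c →
      (c.b1.length : ℕ∞) ≤ k1 ∧ (c.b2.length : ℕ∞) ≤ k2) ∧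
  ((∃ N, ∀ n, N ≤ n → ¬ A.acc (sp n).2) ∨
    ((∀ n j, ∃ m, pushed σ sp j n ≤ consumed dm j m) ∧
     (∀ n, ∃ m, n ≤ m ∧ ∃ x ∈ dm m, B.acc x.2)))

/-- `dstrat` is a winning strategy for Duplicator in the two-buffer simulation game on
`A`, `B` with letter distribution `σ` and capacities `(k1, k2)`: against every legal
behaviour of Spoiler, all of Duplicator's prescribed moves are legal (the play never
breaks) and the resulting play is won by Duplicator. -/
def WinningStrat2 {S : Type} (A B : BA S) (σ : S → Bool) (k1 k2 : ℕ∞)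
    (dstrat : List ((S × A.Q) × List (Bool × B.Q)) → (S × A.Q) → List (Bool × B.Q)) : Prop :=
  ∀ sp dm, Consistent A B dstrat sp dm → SpLegal A B σ sp dm →
    (∀ n, (playCfg A B σ sp dm n).isSome) ∧ Win2 A B σ k1 k2 sp dm

/-- Two-buffer simulation `A ⊑(k1,k2) B`: Duplicator has a winning strategy. -/
def Sim2 {S : Type} (A B : BA S) (σ : S → Bool) (k1 k2 : ℕ∞) : Prop :=
  ∃ dstrat, WinningStrat2 A B σ k1 k2 dstrat
/-- The concatenation of the infinite sequence of finite words `g 0, g 1, g 2, …`,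
as a finite or infinite word represented by a function `ℕ → Option α`
(`iConcat g k = some a` iff the concatenation has an `k`-th letter and it is `a`). -/
noncomputable def iConcat {α : Type} (g : ℕ → List α) : ℕ → Option α := fun k =>
  if h : ∃ m, k < ((List.range m).map g).flatten.length
  then ((List.range h.choose).map g).flatten[k]?
  else none

/-- The projection of an infinite word `w` onto the letters of buffer index `j`
(i.e. onto the sub-alphabet `σ⁻¹(j)`), as a finite or infinite word. -/
noncomputable def projW {S : Type} (σ : S → Bool) (j : Bool) (w : ℕ → S) : ℕ → Option S :=
  iConcat fun n => if σ (w n) = j then [w n] else []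

/-! Let Spoiler play an accepting run of `A` on `w`, letter by letter, against Duplicator's
winning strategy. Since Spoiler's run is accepting, Duplicator must consume every letter and visit
accepting states infinitely often, so the letters she consumes, in the order she consumes them,
together with her states form an accepting run of `B` on a word `v`. Each buffer is a FIFO queue
fed with the `Σⱼ`-letters of `w` in their order, so at every round the `Σⱼ`-letters of `v`
consumed so far form a prefix of the `Σⱼ`-letters of `w` pushed so far, and this prefix
eventually covers every letter pushed. -/

section InfiniteConcat

variable {α : Type}

def partialConcat (g : ℕ → List α) (n : ℕ) : List α := ((List.range n).map g).flatten

@[simp] lemma partialConcat_zero (g : ℕ → List α) : partialConcat g 0 = [] := rfl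

lemma partialConcat_succ (g : ℕ → List α) (n : ℕ) :
    partialConcat g (n + 1) = partialConcat g n ++ g n := by
  simp [partialConcat, List.range_succ]

lemma partialConcat_prefix_of_le (g : ℕ → List α) {m n : ℕ} (h : m ≤ n) :
    partialConcat g m <+: partialConcat g n := by
  induction n, h using Nat.le_induction with
  | base => exact List.prefix_refl _
  | succ n _ ih => exact ih.trans (partialConcat_succ g n ▸ List.prefix_append _ _)

lemma exists_le_length_partialConcat {g : ℕ → List α} (h : ∀ N, ∃ n ≥ N, g n ≠ [])
    (K : ℕ) :
    ∃ n, K ≤ (partialConcat g n).length := by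
  induction K with
  | zero => exact ⟨0, Nat.zero_le _⟩
  | succ K ih =>
    obtain ⟨n, hn⟩ := ih
    obtain ⟨m, hm, hne⟩ := h n
    have hmono := (partialConcat_prefix_of_le g hm).length_le
    have hpos := List.length_pos_iff.2 hne
    exact ⟨m + 1, by rw [partialConcat_succ, List.length_append]; omega⟩

lemma partialConcat_ite_singleton (p : α → Prop) [DecidablePred p] (u : ℕ → α) (n : ℕ) :
    partialConcat (fun i => if p (u i) then [u i] else []) n
      = ((List.range n).map u).filter fun a => p a := by
  induction n with
  | zero => rfl
  | succ n ih =>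
    rw [partialConcat_succ, ih, List.range_succ, List.map_append, List.filter_append]
    by_cases hp : p (u n) <;> simp [hp]

lemma getElem?_partialConcat_eq {g : ℕ → List α} {k m n : ℕ}
    (hm : k < (partialConcat g m).length) (hn : k < (partialConcat g n).length) :
    (partialConcat g m)[k]? = (partialConcat g n)[k]? := by
  wlog hmn : m ≤ n generalizing m n
  · exact (this hn hm (le_of_not_ge hmn)).symm
  rw [List.getElem?_eq_getElem hm, List.getElem?_eq_getElem hn,
    (partialConcat_prefix_of_le g hmn).getElem hm]

lemma iConcat_eq_getElem? {g : ℕ → List α} {k n : ℕ} (h : k < (partialConcat g n).length) :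
    iConcat g k = (partialConcat g n)[k]? := by
  have hex : ∃ m, k < (partialConcat g m).length := ⟨n, h⟩
  exact (dif_pos hex).trans (getElem?_partialConcat_eq hex.choose_spec h)

lemma iConcat_eq_none {g : ℕ → List α} {k : ℕ}
    (h : ∀ n, (partialConcat g n).length ≤ k) :
    iConcat g k = none :=
  dif_neg fun ⟨n, hn⟩ => (h n).not_gt hn

lemma iConcat_eq_of_prefix_cofinal {g g' : ℕ → List α}
    (h : ∀ n, ∃ m, partialConcat g n <+: partialConcat g' m)
    (h' : ∀ m, ∃ n, partialConcat g' m <+: partialConcat g n) : iConcat g = iConcat g' := by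
  funext k
  by_cases hk : ∃ n, k < (partialConcat g n).length
  · obtain ⟨n, hn⟩ := hk
    obtain ⟨m, hm⟩ := h n
    have hm' := hn.trans_le hm.length_le
    rw [iConcat_eq_getElem? hn, iConcat_eq_getElem? hm', List.getElem?_eq_getElem hn,
      List.getElem?_eq_getElem hm', hm.getElem hn]
  · push Not at hk
    refine (iConcat_eq_none hk).trans (iConcat_eq_none fun m => ?_).symm
    obtain ⟨n, hn⟩ := h' m
    exact hn.length_le.trans (hk n)

noncomputable def iFlat (g : ℕ → List α) (d : α) (k : ℕ) : α := (iConcat g k).getD d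

lemma iFlat_eq_getElem {g : ℕ → List α} {d : α} {k n : ℕ}
    (h : k < (partialConcat g n).length) : iFlat g d k = (partialConcat g n)[k] := by
  rw [iFlat, iConcat_eq_getElem? h, List.getElem?_eq_getElem h, Option.getD_some]

lemma map_range_iFlat {g : ℕ → List α} (d : α) {K n : ℕ}
    (h : K ≤ (partialConcat g n).length) :
    (List.range K).map (iFlat g d) = (partialConcat g n).take K := by
  refine List.ext_getElem (by simp [h]) fun k hk _ => ?_
  simp only [List.getElem_map, List.getElem_range, List.getElem_take]
  exact iFlat_eq_getElem (by simp at hk; omega)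

lemma partialConcat_eq_append_of_queue {inp out b : ℕ → List α} (h0 : b 0 = [])
    (h : ∀ n, b n ++ inp n = out n ++ b (n + 1)) (n : ℕ) :
    partialConcat inp n = partialConcat out n ++ b n := by
  induction n with
  | zero => simp [h0]
  | succ n ih => rw [partialConcat_succ, partialConcat_succ, ih, List.append_assoc, h,
      List.append_assoc]

lemma filter_map_partialConcat {β : Type} (f : α → β) (p : β → Bool) (g : ℕ → List α)
    (n : ℕ) :
    ((partialConcat g n).map f).filter p = partialConcat (fun i => ((g i).map f).filter p) n := by
  induction n with
  | zero => rfl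
  | succ n ih => simp [partialConcat_succ, ih]

end InfiniteConcat

namespace BA

variable {S : Type}

inductive Path (B : BA S) : B.Q → List (S × B.Q) → B.Q → Prop
  | nil (q : B.Q) : Path B q [] q
  | cons {q q' q'' : B.Q} {a : S} {l : List (S × B.Q)} :
      B.trans q a q' → Path B q' l q'' → Path B q ((a, q') :: l) q''

variable {B : BA S}

lemma Path.append {q q' q'' : B.Q} {l l' : List (S × B.Q)} (h : B.Path q l q')
    (h' : B.Path q' l' q'') : B.Path q (l ++ l') q'' := by
  induction h with
  | nil => exact h'
  | cons ht _ ih => exact .cons ht (ih h')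

lemma Path.trans_getElem {q q' : B.Q} {l : List (S × B.Q)} (h : B.Path q l q') {k : ℕ}
    (hk : k < l.length) :
    B.trans ((q :: l.map Prod.snd)[k]'(by simp; omega)) l[k].1 l[k].2 := by
  induction h generalizing k with
  | nil => simp at hk
  | cons ht _ ih =>
    cases k with
    | zero => exact ht
    | succ k => exact ih (by simpa using hk)

lemma path_partialConcat {g : ℕ → List (S × B.Q)} {q : ℕ → B.Q}
    (h : ∀ n, B.Path (q n) (g n) (q (n + 1))) (n : ℕ) :
    B.Path (q 0) (partialConcat g n) (q n) := by
  induction n with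
  | zero => exact .nil _
  | succ n ih => rw [partialConcat_succ]; exact ih.append (h n)

theorem iFlat_mem_Lang {g : ℕ → List (S × B.Q)} {q : ℕ → B.Q} (h0 : q 0 = B.init)
    (hpath : ∀ n, B.Path (q n) (g n) (q (n + 1)))
    (hacc : ∀ N, ∃ n ≥ N, ∃ x ∈ g n, B.acc x.2) (d : S × B.Q) :
    (fun k => (iFlat g d k).1) ∈ B.Lang := by
  have hunb := exists_le_length_partialConcat fun N =>
    (hacc N).imp fun _ ⟨hn, _, hx, _⟩ => ⟨hn, List.ne_nil_of_mem hx⟩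
  refine ⟨fun | 0 => B.init | k + 1 => (iFlat g d k).2, rfl, fun k => ?_, fun N => ?_⟩
  · obtain ⟨n, hn⟩ := hunb (k + 1)
    have hk : k < (partialConcat g n).length := by omega
    have htrans := (h0 ▸ path_partialConcat hpath n).trans_getElem hk
    cases k with
    | zero => simpa [iFlat_eq_getElem hk] using htrans
    | succ k =>
      have hk' : k < (partialConcat g n).length := by omega
      simpa [iFlat_eq_getElem hk, iFlat_eq_getElem hk'] using htrans
  · obtain ⟨n₀, hn₀⟩ := hunb N
    obtain ⟨n, hn, x, hx, hxacc⟩ := hacc n₀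
    obtain ⟨i, hi, rfl⟩ := List.getElem_of_mem hx
    have hlen : (partialConcat g n).length + i < (partialConcat g (n + 1)).length := by
      rw [partialConcat_succ, List.length_append]; omega
    refine ⟨(partialConcat g n).length + i + 1, ?_, ?_⟩
    · have := (partialConcat_prefix_of_le g hn).length_le; omega
    · show B.acc (iFlat g d _).2
      rw [iFlat_eq_getElem hlen]
      simpa [partialConcat_succ, List.getElem_append_right] using hxacc

end BA

section Projection

variable {S : Type} (σ : S → Bool) (j : Bool)

def projBlocks (u : ℕ → S) (n : ℕ) : List S := if σ (u n) = j then [u n] else []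

lemma partialConcat_projBlocks (u : ℕ → S) (n : ℕ) :
    partialConcat (projBlocks σ j u) n = ((List.range n).map u).filter (σ · = j) :=
  partialConcat_ite_singleton (σ · = j) u n

variable {σ j}

theorem projW_eq_of_prefix_of_catchUp {w v : ℕ → S} {ℓ : ℕ → ℕ} (hℓ : Monotone ℓ)
    (hℓ_unbounded : ∀ K, ∃ m, K ≤ ℓ m)
    (hprefix : ∀ m,
      partialConcat (projBlocks σ j v) (ℓ m) <+: partialConcat (projBlocks σ j w) m)
    (hcatchUp : ∀ n, ∃ m, (partialConcat (projBlocks σ j w) n).length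
      ≤ (partialConcat (projBlocks σ j v) (ℓ m)).length) :
    projW σ j w = projW σ j v := by
  refine iConcat_eq_of_prefix_cofinal (fun n => ?_) (fun K => ?_)
  · obtain ⟨m, hm⟩ := hcatchUp n
    refine ⟨ℓ (max n m), List.prefix_of_prefix_length_le
      (partialConcat_prefix_of_le _ (le_max_left n m)) (hprefix _) (hm.trans ?_)⟩
    exact (partialConcat_prefix_of_le _ (hℓ (le_max_right n m))).length_le
  · obtain ⟨m, hm⟩ := hℓ_unbounded K
    exact ⟨m, (partialConcat_prefix_of_le _ hm).trans (hprefix m)⟩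

end Projection

section Game

variable {S : Type} {A B : BA S} {σ : S → Bool}

def Cfg.buf (c : Cfg A B) (j : Bool) : List S := if j then c.b1 else c.b2

def Cfg.Distributed (σ : S → Bool) (c : Cfg A B) : Prop := ∀ j, ∀ a ∈ c.buf j, σ a = j

def Cfg.afterConsume (c : Cfg A B) (j : Bool) (β : List S) (p : B.Q) : Cfg A B :=
  if j then ⟨c.qa, β, c.b2, p⟩ else ⟨c.qa, c.b1, β, p⟩

@[simp] lemma Cfg.afterConsume_qa (c : Cfg A B) (j : Bool) (β : List S) (p : B.Q) :
    (c.afterConsume j β p).qa = c.qa := by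
  cases j <;> rfl

@[simp] lemma Cfg.afterConsume_qb (c : Cfg A B) (j : Bool) (β : List S) (p : B.Q) :
    (c.afterConsume j β p).qb = p := by
  cases j <;> rfl

lemma Cfg.buf_afterConsume (c : Cfg A B) (j : Bool) (β : List S) (p : B.Q) (i : Bool) :
    (c.afterConsume j β p).buf i = if i = j then β else c.buf i := by
  cases i <;> cases j <;> rfl

lemma buf_midCfg (c : Cfg A B) (m : S × A.Q) (j : Bool) :
    (midCfg σ c m).buf j = c.buf j ++ if σ m.1 = j then [m.1] else [] := by
  cases j <;> cases h : σ m.1 <;> simp [Cfg.buf, midCfg, h]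

lemma Cfg.Distributed.midCfg {c : Cfg A B} (hc : c.Distributed σ) (m : S × A.Q) :
    (midCfg σ c m).Distributed σ := by
  intro j a ha
  rw [buf_midCfg, List.mem_append] at ha
  rcases ha with ha | ha
  · exact hc j a ha
  · split_ifs at ha with hm
    · rwa [List.mem_singleton.1 ha]
    · simp at ha

lemma exists_of_dupApply_cons_eq_some {c c' : Cfg A B} {j : Bool} {p : B.Q}
    {ms : List (Bool × B.Q)} (h : dupApply A B c ((j, p) :: ms) = some c') :
    ∃ b β, c.buf j = b :: β ∧ B.trans c.qb b p ∧
      dupApply A B (c.afterConsume j β p) ms = some c' := by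
  obtain ⟨qa, b1, b2, qb⟩ := c
  cases j <;> [cases hb : b2; cases hb : b1] <;> simp_all [dupApply, Cfg.buf, Cfg.afterConsume]

lemma qa_of_dupApply_eq_some {c c' : Cfg A B} {ms : List (Bool × B.Q)}
    (h : dupApply A B c ms = some c') : c'.qa = c.qa := by
  induction ms generalizing c with
  | nil => simp_all [dupApply]
  | cons m ms ih =>
    obtain ⟨_, _, _, _, hrest⟩ := exists_of_dupApply_cons_eq_some h
    simpa using ih hrest

lemma Cfg.Distributed.afterConsume {c : Cfg A B} (hc : c.Distributed σ) {j : Bool} {b : S}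
    {β : List S} (hb : c.buf j = b :: β) (p : B.Q) : (c.afterConsume j β p).Distributed σ := by
  intro i a ha
  rw [Cfg.buf_afterConsume] at ha
  split_ifs at ha with hij
  · subst hij; exact hc i a (hb ▸ List.mem_cons_of_mem b ha)
  · exact hc i a ha

lemma exists_path_of_dupApply_eq_some {c c' : Cfg A B} {ms : List (Bool × B.Q)}
    (hc : c.Distributed σ) (h : dupApply A B c ms = some c') :
    ∃ tr : List (S × B.Q), tr.map (fun x => (σ x.1, x.2)) = ms ∧ B.Path c.qb tr c'.qb ∧
      ∀ j, c.buf j = (tr.map Prod.fst).filter (σ · = j) ++ c'.buf j := by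
  induction ms generalizing c with
  | nil =>
    obtain rfl : c = c' := by simpa [dupApply] using h
    exact ⟨[], rfl, .nil _, fun j => rfl⟩
  | cons m ms ih =>
    obtain ⟨j, p⟩ := m
    obtain ⟨b, β, hb, htrans, hrest⟩ := exists_of_dupApply_cons_eq_some h
    have hσb : σ b = j := hc j b (hb ▸ List.mem_cons_self)
    obtain ⟨tr, hms, hpath, hbuf⟩ := ih (hc.afterConsume hb p) hrest
    refine ⟨(b, p) :: tr, by simp [hms, hσb], .cons htrans (by simpa using hpath), fun i => ?_⟩
    have hi := hbuf i
    rw [Cfg.buf_afterConsume] at hi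
    by_cases hij : i = j
    · subst hij; simpa [hb, hσb] using hi
    · simpa [hij, hσb, Ne.symm hij] using hi

end Game

section Play

variable {S : Type} {A B : BA S} {σ : S → Bool} {sp : ℕ → S × A.Q}
  {dm : ℕ → List (Bool × B.Q)}

lemma playCfg_succ_eq_some {n : ℕ} {c' : Cfg A B} :
    playCfg A B σ sp dm (n + 1) = some c' ↔ ∃ c, playCfg A B σ sp dm n = some c ∧
      A.trans c.qa (sp n).1 (sp n).2 ∧ dupApply A B (midCfg σ c (sp n)) (dm n) = some c' := by
  rw [playCfg]
  cases playCfg A B σ sp dm n <;> simp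

lemma qa_of_playCfg_succ_eq_some {n : ℕ} {c : Cfg A B}
    (h : playCfg A B σ sp dm (n + 1) = some c) : c.qa = (sp n).2 := by
  obtain ⟨_, _, _, happly⟩ := playCfg_succ_eq_some.1 h
  exact qa_of_dupApply_eq_some happly

lemma distributed_of_playCfg_eq_some {n : ℕ} {c : Cfg A B}
    (h : playCfg A B σ sp dm n = some c) : c.Distributed σ := by
  induction n generalizing c with
  | zero =>
    obtain rfl : ⟨A.init, [], [], B.init⟩ = c := by simpa [playCfg] using h
    rintro (_ | _) _ ha <;> simp [Cfg.buf] at ha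
  | succ n ih =>
    obtain ⟨c₀, hc₀, _, happly⟩ := playCfg_succ_eq_some.1 h
    obtain ⟨tr, -, -, hbuf⟩ := exists_path_of_dupApply_eq_some ((ih hc₀).midCfg (sp n)) happly
    exact fun j a ha => (ih hc₀).midCfg (sp n) j a (hbuf j ▸ List.mem_append_right _ ha)

lemma spLegal_of_run {w : ℕ → S} {ρ : ℕ → A.Q} (h0 : ρ 0 = A.init)
    (hρ : ∀ n, A.trans (ρ n) (w n) (ρ (n + 1))) (dm : ℕ → List (Bool × B.Q)) :
    SpLegal A B σ (fun n => (w n, ρ (n + 1))) dm := by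
  rintro (_ | n) c hc
  · obtain rfl : ⟨A.init, [], [], B.init⟩ = c := by simpa [playCfg] using hc
    exact h0 ▸ hρ 0
  · rw [qa_of_playCfg_succ_eq_some hc]
    exact hρ (n + 1)

lemma exists_round_trace {cfg : ℕ → Cfg A B}
    (hcfg : ∀ n, playCfg A B σ sp dm n = some (cfg n)) (n : ℕ) :
    ∃ tr : List (S × B.Q), tr.map (fun x => (σ x.1, x.2)) = dm n ∧
      B.Path (cfg n).qb tr (cfg (n + 1)).qb ∧
      ∀ j, (cfg n).buf j ++ projBlocks σ j (fun i => (sp i).1) n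
        = (tr.map Prod.fst).filter (σ · = j) ++ (cfg (n + 1)).buf j := by
  obtain ⟨c, hc, -, happly⟩ := playCfg_succ_eq_some.1 (hcfg (n + 1))
  obtain rfl : c = cfg n := Option.some_injective _ (hc.symm.trans (hcfg n))
  obtain ⟨tr, hms, hpath, hbuf⟩ :=
    exists_path_of_dupApply_eq_some ((distributed_of_playCfg_eq_some hc).midCfg (sp n)) happly
  exact ⟨tr, hms, hpath, fun j => (buf_midCfg _ _ j).symm.trans (hbuf j)⟩

end Play

def playHistory {X Y : Type} (f : List (X × Y) → X → Y) (x : ℕ → X) : ℕ → List (X × Y)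
  | 0 => []
  | n + 1 => playHistory f x n ++ [(x n, f (playHistory f x n) (x n))]

lemma playHistory_eq_ofFn {X Y : Type} (f : List (X × Y) → X → Y) (x : ℕ → X) (n : ℕ) :
    playHistory f x n = List.ofFn fun i : Fin n => (x i, f (playHistory f x i) (x i)) := by
  induction n with
  | zero => rfl
  | succ n ih =>
    rw [playHistory, List.ofFn_succ', List.concat_eq_append]
    simp only [Fin.val_castSucc, Fin.val_last, ← ih]

lemma consistent_playHistory {S : Type} {A B : BA S}
    (dstrat : List ((S × A.Q) × List (Bool × B.Q)) → (S × A.Q) → List (Bool × B.Q))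
    (sp : ℕ → S × A.Q) :
    Consistent A B dstrat sp fun n => dstrat (playHistory dstrat sp n) (sp n) :=
  fun n => congrArg (dstrat · (sp n)) (playHistory_eq_ofFn dstrat sp n)

section Counting

variable {S : Type} {σ : S → Bool}

lemma pushed_eq_length {QA : Type} (sp : ℕ → S × QA) (j : Bool) (n : ℕ) :
    pushed σ sp j n = (partialConcat (projBlocks σ j fun i => (sp i).1) n).length := by
  induction n with
  | zero => rfl
  | succ n ih =>
    rw [pushed, Finset.card_filter, Finset.sum_range_succ, ← Finset.card_filter, ← pushed, ih,
      partialConcat_succ, List.length_append, projBlocks]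
    split_ifs <;> rfl

lemma consumed_eq_length {QB : Type} {tr : ℕ → List (S × QB)} {dm : ℕ → List (Bool × QB)}
    (h : ∀ n, (tr n).map (fun x => (σ x.1, x.2)) = dm n) (j : Bool) (m : ℕ) :
    consumed dm j m
      = (partialConcat (fun n => ((tr n).map Prod.fst).filter (σ · = j)) m).length := by
  induction m with
  | zero => rfl
  | succ m ih =>
    rw [consumed, Finset.sum_range_succ, ← consumed, ih, partialConcat_succ, List.length_append,
      ← h m, List.filter_map, List.filter_map, List.length_map, List.length_map]
    rfl

end Counting

theorem exists_mem_Lang_projW_eq_of_play {S : Type} {A B : BA S} {σ : S → Bool}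
    {sp : ℕ → S × A.Q} {dm : ℕ → List (Bool × B.Q)}
    (hdef : ∀ n, (playCfg A B σ sp dm n).isSome)
    (hconsume : ∀ n j, ∃ m, pushed σ sp j n ≤ consumed dm j m)
    (haccB : ∀ n, ∃ m, n ≤ m ∧ ∃ x ∈ dm m, B.acc x.2) :
    ∃ v ∈ B.Lang, ∀ j, projW σ j (fun n => (sp n).1) = projW σ j v := by
  choose cfg hcfg using fun n => Option.isSome_iff_exists.1 (hdef n)
  choose tr hms hpath hqueue using exists_round_trace hcfg
  have h0 : cfg 0 = ⟨A.init, [], [], B.init⟩ := by simpa [playCfg] using (hcfg 0).symm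
  have hacc N : ∃ n ≥ N, ∃ x ∈ tr n, B.acc x.2 := by
    obtain ⟨m, hm, x, hx, hxacc⟩ := haccB N
    rw [← hms m, List.mem_map] at hx
    obtain ⟨y, hy, rfl⟩ := hx
    exact ⟨m, hm, y, hy, hxacc⟩
  set d : S × B.Q := ((sp 0).1, B.init)
  refine ⟨fun k => (iFlat tr d k).1,
    BA.iFlat_mem_Lang (q := fun n => (cfg n).qb) (by simp [h0]) hpath hacc d, fun j => ?_⟩
  set out := fun n => ((tr n).map Prod.fst).filter (σ · = j)
  have hfifo := partialConcat_eq_append_of_queue (b := fun n => (cfg n).buf j)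
    (by rw [h0]; cases j <;> rfl) (hqueue · j)
  have hv m : partialConcat (projBlocks σ j fun k => (iFlat tr d k).1) (partialConcat tr m).length
      = partialConcat out m := by
    rw [partialConcat_projBlocks,
      show (fun k => (iFlat tr d k).1) = Prod.fst ∘ iFlat tr d from rfl, ← List.map_map,
      map_range_iFlat d le_rfl, List.take_length, filter_map_partialConcat]
  refine projW_eq_of_prefix_of_catchUp (ℓ := fun m => (partialConcat tr m).length)
    (fun _ _ h => (partialConcat_prefix_of_le tr h).length_le)
    (exists_le_length_partialConcat fun N => (hacc N).imp fun _ ⟨hn, _, hx, _⟩ =>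
      ⟨hn, List.ne_nil_of_mem hx⟩) (fun m => ?_) (fun n => ?_)
  · rw [hv, hfifo]
    exact List.prefix_append _ _
  · obtain ⟨m, hm⟩ := hconsume n j
    exact ⟨m, by rwa [hv, ← consumed_eq_length hms, ← pushed_eq_length]⟩

theorem sim2_implies_projection_inclusion {S : Type} (A B : BA S) (σ : S → Bool)
    (k1 k2 : ℕ∞) (h : Sim2 A B σ k1 k2) :
    ∀ w ∈ BA.Lang A, ∃ v ∈ BA.Lang B,
      projW σ true w = projW σ true v ∧ projW σ false w = projW σ false v := by
  obtain ⟨dstrat, hdstrat⟩ := h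
  rintro w ⟨ρ, hρ0, hρ, hρacc⟩
  set sp : ℕ → S × A.Q := fun n => (w n, ρ (n + 1))
  obtain ⟨hdef, -, hwin⟩ :=
    hdstrat sp _ (consistent_playHistory dstrat sp) (spLegal_of_run hρ0 hρ _)
  rcases hwin with ⟨N, hN⟩ | ⟨hconsume, haccB⟩
  · obtain ⟨m, hm, hacc⟩ := hρacc (N + 1)
    obtain ⟨n, rfl⟩ : ∃ n, m = n + 1 := ⟨m - 1, by omega⟩
    exact absurd hacc (hN n (by omega))
  · obtain ⟨v, hv, hproj⟩ := exists_mem_Lang_projW_eq_of_play hdef hconsume haccB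
    exact ⟨v, hv, hproj true, hproj false⟩
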